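/- arXiv:2303.11986 — 2 statements merged into one kernel-verified Lean document; each statement's English description precedes it below -/
import Mathlib

section
/- Every regainingly approximable real number is speedable. In particular, if (x_n) is a computable non-decreasing sequence of rationals converging to x with x - x_n < 2^{-n} for infinitely many n, then the sequence y_n := x_n - 2^{-n} is computable, strictly increasing, converges to x, and satisfies (y_{n+1} - y_n)/(x - y_n) > 1/4 for infinitely many n. -/
/-!
Shift the approximations down, `y n = x n - 2⁻ⁿ`. Then `y (n+1) - y n ≥ 2⁻⁽ⁿ⁺¹⁾` and
`x - y n ≥ 2⁻ⁿ`, while at every `n` with `x - x n < 2⁻ⁿ` also `x - y n < 2 · 2⁻ⁿ`; so the relative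
jump `(y (n+1) - y n) / (x - y n)` exceeds `1/4` infinitely often, which is speedability with
`ρ = 3/4`.

The remaining work is the computability of `y`. Mathlib encodes a rational by its rank in the
range of the structural code `(q.num, q.den)`. That range is decidable (positive denominator,
coprime to the numerator), so enumerating it recovers `num` and `den` computably; a rational
function whose graph is decided by cross-multiplying numerators and denominators is then found
by unbounded search.
-/

open Filter

/-- A real number is computable if some computable sequence of rationals
approximates it with error below `2^(-n)` at each `n`. -/
def ComputableReal (x : ℝ) : Prop :=
  ∃ a : ℕ → ℚ, Computable a ∧ ∀ n : ℕ, |x - (a n : ℝ)| < (2:ℝ) ^ (-(n:ℤ))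

/-- A real number is left-computable if some computable non-decreasing
sequence of rationals converges to it. -/
def LeftComputable (x : ℝ) : Prop :=
  ∃ a : ℕ → ℚ, Computable a ∧ Monotone a ∧
    Tendsto (fun n => (a n : ℝ)) atTop (nhds x)

/-- Regainingly approximable real numbers. -/
def RegaininglyApproximable (x : ℝ) : Prop :=
  ∃ a : ℕ → ℚ, Computable a ∧ Monotone a ∧
    Tendsto (fun n => (a n : ℝ)) atTop (nhds x) ∧
    ∃ᶠ n in atTop, x - (a n : ℝ) < (2:ℝ) ^ (-(n:ℤ))

/-- Nearly computable real numbers. -/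
def NearlyComputable (x : ℝ) : Prop :=
  ∃ a : ℕ → ℚ, Computable a ∧ Tendsto (fun n => (a n : ℝ)) atTop (nhds x) ∧
    ∀ s : ℕ → ℕ, Computable s → StrictMono s →
      ∃ m : ℕ → ℕ, Computable m ∧
        ∀ n : ℕ, ∀ k, m n ≤ k → |(a (s (k+1)) : ℝ) - (a (s k) : ℝ)| < (2:ℝ) ^ (-(n:ℤ))

/-- Speedable real numbers. -/
def Speedable (x : ℝ) : Prop :=
  ∃ ρ : ℝ, 0 < ρ ∧ ρ < 1 ∧
    ∃ a : ℕ → ℚ, Computable a ∧ StrictMono a ∧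
      Tendsto (fun n => (a n : ℝ)) atTop (nhds x) ∧
      ∃ᶠ n in atTop, (x - (a (n+1) : ℝ)) / (x - (a n : ℝ)) ≤ ρ

open Encodable Denumerable

theorem Nat.gcd_eq_findGreatest (a b : ℕ) :
    Nat.gcd a b = Nat.findGreatest (fun d => d ∣ a ∧ d ∣ b) (a + b) := by
  refine (Nat.findGreatest_eq_iff.2 ⟨?_, fun _ => ⟨Nat.gcd_dvd_left a b, Nat.gcd_dvd_right a b⟩,
    fun d hlt _ hd => hlt.not_ge (Nat.le_of_dvd ?_ (Nat.dvd_gcd hd.1 hd.2))⟩).symm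
  · rcases Nat.eq_zero_or_pos (a + b) with h | h
    · simp_all
    · exact Nat.le_of_dvd h (Nat.dvd_add (Nat.gcd_dvd_left a b) (Nat.gcd_dvd_right a b))
  · exact Nat.pos_of_ne_zero (by rintro h; simp_all)

namespace Primrec

/- The code of an integer is `2 * k` for `k ≥ 0` and `2 * k + 1` for `-(k + 1)`. -/

theorem int_toNat : Primrec Int.toNat := by
  refine (Primrec.ite (Primrec.eq.comp (nat_mod.comp Primrec.encode (const 2)) (const 0))
    (nat_div.comp Primrec.encode (const 2)) (const 0)).of_eq fun z => ?_
  rcases z with k | k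
  · change (if 2 * k % 2 = 0 then 2 * k / 2 else 0) = k
    simp
  · change (if (2 * k + 1) % 2 = 0 then (2 * k + 1) / 2 else 0) = 0
    simp [Nat.add_mod]

theorem int_neg : Primrec (Neg.neg : ℤ → ℤ) := by
  refine encode_iff.1 <| (Primrec.ite (Primrec.eq.comp (nat_mod.comp Primrec.encode (const 2))
    (const 0)) (nat_sub.comp Primrec.encode (const 1))
    (nat_add.comp Primrec.encode (const 1))).of_eq fun z => ?_
  rcases z with (_ | k) | k
  · rfl
  · change (if 2 * (k + 1) % 2 = 0 then 2 * (k + 1) - 1 else 2 * (k + 1) + 1) = 2 * k + 1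
    simp; omega
  · change (if (2 * k + 1) % 2 = 0 then 2 * k + 1 - 1 else 2 * k + 1 + 1) = 2 * (k + 1)
    simp [Nat.add_mod]; omega

theorem int_natCast_sub : Primrec₂ (fun m n : ℕ => (m : ℤ) - n) := by
  refine encode_iff.1 <| (Primrec.ite (nat_le.comp snd fst) (nat_double.comp (nat_sub.comp fst snd))
    (nat_sub.comp (nat_double.comp (nat_sub.comp snd fst)) (const 1))).of_eq fun ⟨m, n⟩ => ?_
  dsimp only
  split_ifs with h
  · rw [← Nat.cast_sub h]; rfl
  · obtain ⟨k, rfl⟩ : ∃ k, n = m + k + 1 := ⟨n - m - 1, by omega⟩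
    rw [show (m : ℤ) - (m + k + 1 : ℕ) = Int.negSucc k by push_cast; rw [Int.negSucc_eq]; ring]
    change 2 * (m + k + 1 - m) - 1 = 2 * k + 1
    omega

theorem int_natCast : Primrec (Nat.cast : ℕ → ℤ) :=
  (int_natCast_sub.comp Primrec.id (const 0)).of_eq fun n => by simp

/- Addition and multiplication are computed on the natural parts of
`z = z.toNat - (-z).toNat`. -/

theorem int_add : Primrec₂ (· + · : ℤ → ℤ → ℤ) := by
  have pos := int_toNat
  have neg := int_toNat.comp int_neg
  refine (int_natCast_sub.comp (nat_add.comp (pos.comp fst) (pos.comp snd))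
    (nat_add.comp (neg.comp fst) (neg.comp snd))).of_eq fun ⟨z, w⟩ => ?_
  dsimp only
  push_cast
  omega

theorem int_mul : Primrec₂ (· * · : ℤ → ℤ → ℤ) := by
  have pos := int_toNat
  have neg := int_toNat.comp int_neg
  refine (int_natCast_sub.comp
    (nat_add.comp (nat_mul.comp (pos.comp fst) (pos.comp snd))
      (nat_mul.comp (neg.comp fst) (neg.comp snd)))
    (nat_add.comp (nat_mul.comp (pos.comp fst) (neg.comp snd))
      (nat_mul.comp (neg.comp fst) (pos.comp snd)))).of_eq fun ⟨z, w⟩ => ?_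
  dsimp only
  push_cast
  linear_combination (w.toNat - (-w).toNat : ℤ) * Int.toNat_sub_toNat_neg z
    + z * Int.toNat_sub_toNat_neg w

theorem nat_dvd : PrimrecRel ((· ∣ ·) : ℕ → ℕ → Prop) :=
  (Primrec.eq.comp (nat_mod.comp snd fst) (const 0)).of_eq fun _ => Nat.dvd_iff_mod_eq_zero.symm

theorem nat_gcd : Primrec₂ Nat.gcd :=
  (nat_findGreatest (p := fun (x : ℕ × ℕ) d => d ∣ x.1 ∧ d ∣ x.2) (nat_add.comp fst snd)
    ((nat_dvd.comp snd (fst.comp fst)).and (nat_dvd.comp snd (snd.comp fst)))).of_eq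
    fun p => (Nat.gcd_eq_findGreatest p.1 p.2).symm

end Primrec

theorem Nat.Subtype.computable_ofNat {s : Set ℕ} [Infinite s] [DecidablePred (· ∈ s)]
    (hs : ComputablePred (· ∈ s)) : Computable fun n => (Nat.Subtype.ofNat s n : ℕ) := by
  have hgap (y : ℕ) : ∃ m, y + m + 1 ∈ s := by
    obtain ⟨z, hz, hyz⟩ := (Set.infinite_coe_iff.1 ‹_›).exists_gt y
    exact ⟨z - y - 1, by rwa [show y + (z - y - 1) + 1 = z by omega]⟩
  have add := Primrec.nat_add.to_comp
  have hsucc : Computable fun y => y + Nat.find (hgap y) + 1 :=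
    add.comp (add.comp Computable.id (Computable.find (Computable.computablePred (hs.decide.comp
      (add.comp (add.comp Computable.fst Computable.snd) (Computable.const 1)))) hgap))
      (Computable.const 1)
  refine (Computable.nat_rec Computable.id (Computable.const ((⊥ : s) : ℕ))
    (hsucc.comp (Computable.snd.comp Computable.snd)).to₂).of_eq fun n => ?_
  induction n with
  | zero => rfl
  | succ n ih => simp only [id] at ih ⊢; rw [ih]; rfl

theorem Denumerable.computable_encode_ofNat_ofEncodableOfInfinite {α : Type*} [Encodable α]
    [Infinite α] (h : ComputablePred (· ∈ Set.range (encode : α → ℕ))) :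
    Computable fun n => encode (@ofNat α (ofEncodableOfInfinite α) n) := by
  let := decidableRangeEncode α
  have : Infinite (Set.range (encode : α → ℕ)) :=
    Infinite.of_injective _ (Equiv.ofInjective _ encode_injective).injective
  refine (Nat.Subtype.computable_ofNat h).of_eq fun n => ?_
  rw [@ofEquiv_ofNat _ _ (Nat.Subtype.denumerable _)]
  exact congrArg Subtype.val ((equivRangeEncode α).apply_symm_apply _).symm

theorem Computable.of_computablePred_graph {β α : Type*} [Primcodable β] [Denumerable α]
    {f : β → α} (hf : ComputablePred fun p : β × α => f p.1 = p.2) : Computable f := by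
  classical
  have hex (b : β) : ∃ m, f b = ofNat α m := ⟨encode (f b), (ofNat_encode _).symm⟩
  have hsearch : ComputablePred fun p : β × ℕ => f p.1 = ofNat α p.2 :=
    (hf.decide.comp (Computable.fst.pair ((Computable.ofNat α).comp Computable.snd))).computablePred
  exact ((Computable.ofNat α).comp (Computable.find hsearch hex)).of_eq
    fun b => (Nat.find_spec (hex b)).symm

namespace Rat

theorem mem_range_encode_iff (y : ℕ) :
    y ∈ Set.range (encode : ℚ → ℕ) ↔
      0 < (ofNat (ℤ × ℕ) y).2 ∧ (ofNat (ℤ × ℕ) y).1.natAbs.Coprime (ofNat (ℤ × ℕ) y).2 := by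
  constructor
  · rintro ⟨q, rfl⟩
    rw [show encode q = encode (q.num, q.den) from rfl, ofNat_encode]
    exact ⟨q.pos, q.reduced⟩
  · rintro ⟨hpos, hcop⟩
    exact ⟨⟨_, _, hpos.ne', hcop⟩, encode_ofNat (α := ℤ × ℕ) y⟩

theorem computablePred_mem_range_encode : ComputablePred (· ∈ Set.range (encode : ℚ → ℕ)) := by
  have hnatAbs : Primrec Int.natAbs :=
    (Primrec.nat_add.comp Primrec.int_toNat (Primrec.int_toNat.comp Primrec.int_neg)).of_eq
      Int.toNat_add_toNat_neg_eq_natAbs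
  have hpair := Primrec.ofNat (ℤ × ℕ)
  refine PrimrecPred.computablePred <|
    ((Primrec.nat_lt.comp (Primrec.const 0) (Primrec.snd.comp hpair)).and
      (Primrec.eq.comp (Primrec.nat_gcd.comp (hnatAbs.comp (Primrec.fst.comp hpair))
        (Primrec.snd.comp hpair)) (Primrec.const 1))).of_eq fun y => (mem_range_encode_iff y).symm

theorem computable_num_den : Computable fun q : ℚ => (q.num, q.den) :=
  ((Computable.ofNat (ℤ × ℕ)).comp
    ((Denumerable.computable_encode_ofNat_ofEncodableOfInfinite
      computablePred_mem_range_encode).comp Computable.encode)).of_eq fun q => by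
    simp only [ofNat_encode]
    exact ofNat_encode (q.num, q.den)

/-- A test for `q - p = r` by cross-multiplication, which needs no normalization of fractions. -/
theorem sub_eq_iff_num_den (q p r : ℚ) :
    q - p = r ↔ (r.num * p.den + p.num * r.den) * q.den = q.num * (r.den * p.den) := by
  rw [← Int.cast_inj (α := ℚ), sub_eq_iff_eq_add]
  push_cast
  conv_lhs => rw [← Rat.num_div_den q, ← Rat.num_div_den p, ← Rat.num_div_den r]
  rw [div_add_div _ _ (by positivity) (by positivity), div_eq_div_iff (by positivity) (by positivity)]
  constructor <;> intro h <;> linarith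

theorem half_pow_eq_iff_num_den (n : ℕ) (r : ℚ) :
    (1/2 : ℚ) ^ n = r ↔ r.num * (2 ^ n : ℕ) = r.den := by
  rw [← Int.cast_inj (α := ℚ)]
  push_cast
  conv_lhs => rw [← Rat.num_div_den r]
  rw [div_pow, one_pow, div_eq_div_iff (by positivity) (by positivity)]
  constructor <;> intro h <;> linarith

theorem computable_num : Computable Rat.num := Computable.fst.comp computable_num_den

theorem computable_den : Computable Rat.den := Computable.snd.comp computable_num_den

theorem computable_sub : Computable₂ (· - · : ℚ → ℚ → ℚ) := by
  have num {α} [Primcodable α] {g : α → ℚ} (hg : Computable g) : Computable fun a => (g a).num :=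
    computable_num.comp hg
  have den {α} [Primcodable α] {g : α → ℚ} (hg : Computable g) :
      Computable fun a => ((g a).den : ℤ) :=
    Primrec.int_natCast.to_comp.comp (computable_den.comp hg)
  have add := Primrec.int_add.to_comp
  have mul := Primrec.int_mul.to_comp
  have q : Computable fun x : (ℚ × ℚ) × ℚ => x.1.1 := Computable.fst.comp Computable.fst
  have p : Computable fun x : (ℚ × ℚ) × ℚ => x.1.2 := Computable.snd.comp Computable.fst
  have r : Computable fun x : (ℚ × ℚ) × ℚ => x.2 := Computable.snd
  refine Computable.of_computablePred_graph <| ComputablePred.of_eq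
    (Primrec.eq.decide.to_comp.comp
      (mul.comp (add.comp (mul.comp (num r) (den p)) (mul.comp (num p) (den r))) (den q))
      (mul.comp (num q) (mul.comp (den r) (den p)))).computablePred
    fun x => ?_
  exact (sub_eq_iff_num_den x.1.1 x.1.2 x.2).symm

theorem computable_half_pow : Computable fun n : ℕ => (1/2 : ℚ) ^ n := by
  have pow : Computable fun n : ℕ => ((2 ^ n : ℕ) : ℤ) :=
    Primrec.int_natCast.to_comp.comp
      ((Primrec₂.unpaired'.1 Nat.Primrec.pow).to_comp.comp (Computable.const 2) Computable.id)
  refine Computable.of_computablePred_graph <| ComputablePred.of_eq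
    (Primrec.eq.decide.to_comp.comp
      (Primrec.int_mul.to_comp.comp (computable_num.comp Computable.snd) (pow.comp Computable.fst))
      (Primrec.int_natCast.to_comp.comp (computable_den.comp Computable.snd))).computablePred
    fun x => ?_
  exact (half_pow_eq_iff_num_den x.1 x.2).symm

end Rat

theorem Monotone.strictMono_sub_half_pow {K : Type*} [Field K] [LinearOrder K]
    [IsStrictOrderedRing K] {a : ℕ → K} (ha : Monotone a) :
    StrictMono fun n => a n - (1/2 : K) ^ n :=
  strictMono_nat_of_lt_succ fun n => by
    have := pow_lt_pow_right_of_lt_one₀ (by norm_num : (0 : K) < 1/2) (by norm_num) (Nat.lt_add_one n)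
    linarith [ha n.le_succ]

theorem quarter_lt_jump_div_gap {x u v ε : ℝ} (hε : 0 < ε) (huv : u ≤ v) (hux : u ≤ x)
    (hxu : x - u < 2 * ε) : 1/4 < ((v - ε) - (u - 2 * ε)) / (x - (u - 2 * ε)) := by
  rw [lt_div_iff₀ (by linarith)]
  linarith

theorem speedable_of_frequently_lt_jump_div_gap {x ρ : ℝ} (hρ₀ : 0 < ρ) (hρ₁ : ρ < 1)
    {b : ℕ → ℚ} (hb : Computable b) (hmono : StrictMono b)
    (hlim : Tendsto (fun n => (b n : ℝ)) atTop (nhds x))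
    (hjump : ∃ᶠ n in atTop, ρ < ((b (n+1) : ℝ) - b n) / (x - b n)) : Speedable x := by
  refine ⟨1 - ρ, by linarith, by linarith, b, hb, hmono, hlim, hjump.mono fun n hn => ?_⟩
  have hgap : 0 < x - b n := by
    have hlt : (b n : ℝ) < b (n + 1) := by exact_mod_cast hmono n.lt_succ_self
    have hle : (b (n + 1) : ℝ) ≤ x :=
      (Rat.cast_strictMono.comp hmono).monotone.ge_of_tendsto hlim (n + 1)
    linarith
  rw [lt_div_iff₀ hgap] at hn
  rw [div_le_iff₀ hgap]
  linarith

theorem tendsto_sub_half_pow {x : ℝ} {a : ℕ → ℚ}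
    (hlim : Tendsto (fun n => (a n : ℝ)) atTop (nhds x)) :
    Tendsto (fun n => ((a n - (1/2 : ℚ) ^ n : ℚ) : ℝ)) atTop (nhds x) := by
  push_cast
  simpa using hlim.sub (tendsto_pow_atTop_nhds_zero_of_lt_one (r := (1/2 : ℝ)) (by norm_num)
    (by norm_num))

theorem frequently_quarter_lt_jump_div_gap {x : ℝ} {a : ℕ → ℚ} (hmono : Monotone a)
    (hlim : Tendsto (fun n => (a n : ℝ)) atTop (nhds x))
    (hfreq : ∃ᶠ n in atTop, x - (a n : ℝ) < (2:ℝ) ^ (-(n:ℤ))) :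
    ∃ᶠ n in atTop, (1/4 : ℝ) <
      (((a (n+1) - (1/2 : ℚ) ^ (n+1) : ℚ) : ℝ) - ((a n - (1/2 : ℚ) ^ n : ℚ) : ℝ)) /
        (x - ((a n - (1/2 : ℚ) ^ n : ℚ) : ℝ)) := by
  refine hfreq.mono fun n hn => ?_
  have hle : (a n : ℝ) ≤ x := (Rat.cast_mono.comp hmono).ge_of_tendsto hlim n
  have hhalf : (1/2 : ℝ) ^ n = 2 * (1/2) ^ (n + 1) := by ring
  rw [zpow_neg, zpow_natCast, ← inv_pow, inv_eq_one_div, hhalf] at hn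
  push_cast
  rw [hhalf]
  exact quarter_lt_jump_div_gap (by positivity) (by exact_mod_cast hmono n.le_succ) hle hn

/-- Every regainingly approximable number is speedable; in particular the
shifted sequence `y_n := x_n - 2^(-n)` is computable, strictly increasing,
converges to `x`, and has relative jumps above `1/4` infinitely often. -/
theorem regaininglyApproximable_speedable :
    (∀ x : ℝ, RegaininglyApproximable x → Speedable x) ∧
    ∀ (x : ℝ) (a : ℕ → ℚ), Computable a → Monotone a →
      Tendsto (fun n => (a n : ℝ)) atTop (nhds x) →
      (∃ᶠ n in atTop, x - (a n : ℝ) < (2:ℝ) ^ (-(n:ℤ))) →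
      Computable (fun n => a n - (1/2 : ℚ) ^ n) ∧
      StrictMono (fun n => a n - (1/2 : ℚ) ^ n) ∧
      Tendsto (fun n => ((a n - (1/2 : ℚ) ^ n : ℚ) : ℝ)) atTop (nhds x) ∧
      ∃ᶠ n in atTop,
        (1/4 : ℝ) <
          (((a (n+1) - (1/2 : ℚ) ^ (n+1) : ℚ) : ℝ) - ((a n - (1/2 : ℚ) ^ n : ℚ) : ℝ)) /
            (x - ((a n - (1/2 : ℚ) ^ n : ℚ) : ℝ)) := by
  refine ⟨?_, fun x a ha hmono hlim hfreq => ⟨Rat.computable_sub.comp ha Rat.computable_half_pow,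
    hmono.strictMono_sub_half_pow, tendsto_sub_half_pow hlim,
    frequently_quarter_lt_jump_div_gap hmono hlim hfreq⟩⟩
  rintro x ⟨a, ha, hmono, hlim, hfreq⟩
  exact speedable_of_frequently_lt_jump_div_gap (ρ := 1/4) (by norm_num) (by norm_num)
    (Rat.computable_sub.comp ha Rat.computable_half_pow) hmono.strictMono_sub_half_pow
    (tendsto_sub_half_pow hlim) (frequently_quarter_lt_jump_div_gap hmono hlim hfreq)
end

section
/- A left-computable real number x is regainingly approximable if and only if there exists a computable non-decreasing sequence of rational numbers (x_n) converging to x and a computable non-decreasing unbounded function f : ℕ → ℕ with x - x_n ≤ 2^{-f(n)} for infinitely many n. -/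
open Filter

/-!
One direction takes `f = id`. Conversely, reindex the approximation along `e k`, the first
index `n` with `k + 1 < f n`: if `x - a n ≤ 2^(-f n)` and `k = f n - 1`, then `n ≤ e k`, so
`x - a (e k) ≤ x - a n < 2^(-k)`. Since `f` is computable and unbounded, `e` is computable by
unbounded search; it is non-decreasing and tends to infinity because `f` is non-decreasing.
-/

theorem Computable.nat_find {α : Type*} [Primcodable α] {p : α → ℕ → Prop}
    [∀ a, DecidablePred (p a)] (hp : Computable₂ fun a n => decide (p a n))
    (H : ∀ a, ∃ n, p a n) : Computable fun a => Nat.find (H a) := by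
  refine (Partrec.rfind hp.partrec₂).of_eq_tot fun a => Nat.mem_rfind.2 ⟨?_, fun hm => ?_⟩
  · simpa using Nat.find_spec (H a)
  · simpa using Nat.find_min (H a) hm

section FirstIndexAbove

variable {f : ℕ → ℕ} (hf : ∀ m, ∃ n, m ≤ f n)

def firstIndexAbove (k : ℕ) : ℕ := Nat.find (hf (k + 1))

variable {hf}

theorem lt_firstIndexAbove (hmono : Monotone f) {n k : ℕ} (h : f n ≤ k) :
    n < firstIndexAbove hf k := by
  by_contra! hle
  have hspec : k + 1 ≤ f (firstIndexAbove hf k) := Nat.find_spec (hf (k + 1))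
  have := hmono hle
  omega

theorem tendsto_firstIndexAbove_atTop (hmono : Monotone f) :
    Tendsto (firstIndexAbove hf) atTop atTop :=
  tendsto_atTop.2 fun N => (eventually_ge_atTop (f N)).mono fun _ hk =>
    (lt_firstIndexAbove hmono hk).le

theorem monotone_firstIndexAbove : Monotone (firstIndexAbove hf) := fun _ _ hij =>
  Nat.find_mono fun _ hn => le_trans (by omega) hn

theorem computable_firstIndexAbove (hc : Computable f) : Computable (firstIndexAbove hf) :=
  have hp : Computable₂ fun k n => decide (k + 1 ≤ f n) :=
    Primrec.nat_le.decide.to_comp.comp (Primrec.succ.to_comp.comp .fst) (hc.comp .snd)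
  Computable.nat_find hp _

theorem frequently_sub_firstIndexAbove_lt_two_zpow (hmono : Monotone f)
    {a : ℕ → ℝ} (ha : Monotone a) {x : ℝ}
    (h : ∃ᶠ n in atTop, x - a n ≤ (2 : ℝ) ^ (-(f n : ℤ))) :
    ∃ᶠ k in atTop, x - a (firstIndexAbove hf (k + 1)) < (2 : ℝ) ^ (-(k : ℤ)) := by
  rw [frequently_atTop] at h ⊢
  intro K
  obtain ⟨N, hN⟩ := hf (K + 1)
  obtain ⟨n, hNn, hn⟩ := h N
  have hKn : K + 1 ≤ f n := hN.trans (hmono hNn)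
  refine ⟨f n - 1, by omega, ?_⟩
  have hidx : n ≤ firstIndexAbove hf (f n - 1 + 1) := (lt_firstIndexAbove hmono (by omega)).le
  calc x - a (firstIndexAbove hf (f n - 1 + 1)) ≤ x - a n := by linarith [ha hidx]
    _ ≤ 2 ^ (-(f n : ℤ)) := hn
    _ < 2 ^ (-((f n - 1 : ℕ) : ℤ)) := zpow_lt_zpow_right₀ one_lt_two (by omega)

end FirstIndexAbove

theorem regaininglyApproximable_iff_unbounded_modulus_general (x : ℝ) :
    RegaininglyApproximable x ↔
      ∃ a : ℕ → ℚ, ∃ f : ℕ → ℕ, Computable a ∧ Monotone a ∧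
        Tendsto (fun n => (a n : ℝ)) atTop (nhds x) ∧
        Computable f ∧ Monotone f ∧ (∀ m : ℕ, ∃ n, m ≤ f n) ∧
        ∃ᶠ n in atTop, x - (a n : ℝ) ≤ (2:ℝ) ^ (-(f n : ℤ))  := by
  constructor
  · rintro ⟨a, ha, hmono, hlim, hreg⟩
    exact ⟨a, id, ha, hmono, hlim, .id, monotone_id, fun m => ⟨m, le_rfl⟩,
      hreg.mono fun _ h => h.le⟩
  · rintro ⟨a, f, ha, hmono, hlim, hf, hfmono, hfu, hmod⟩
    let e k := firstIndexAbove hfu (k + 1)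
    have he : Computable e := (computable_firstIndexAbove hf).comp .succ
    have he_mono : Monotone e := monotone_firstIndexAbove.comp fun _ _ h => Nat.succ_le_succ h
    have he_lim : Tendsto e atTop atTop :=
      (tendsto_firstIndexAbove_atTop hfmono).comp (tendsto_add_atTop_nat 1)
    exact ⟨fun k => a (e k), ha.comp he, hmono.comp he_mono, hlim.comp he_lim,
      frequently_sub_firstIndexAbove_lt_two_zpow hfmono (Rat.cast_mono.comp hmono) hmod⟩

/-- A left-computable number is regainingly approximable iff there is a
computable non-decreasing rational approximation and a computable
non-decreasing unbounded function `f` with `x - x_n ≤ 2^(-f n)`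
infinitely often. -/
theorem regaininglyApproximable_iff_unbounded_modulus (x : ℝ)
    (hl : LeftComputable x) :
    RegaininglyApproximable x ↔
      ∃ a : ℕ → ℚ, ∃ f : ℕ → ℕ, Computable a ∧ Monotone a ∧
        Tendsto (fun n => (a n : ℝ)) atTop (nhds x) ∧
        Computable f ∧ Monotone f ∧ (∀ m : ℕ, ∃ n, m ≤ f n) ∧
        ∃ᶠ n in atTop, x - (a n : ℝ) ≤ (2:ℝ) ^ (-(f n : ℤ)) :=
  regaininglyApproximable_iff_unbounded_modulus_general x
end
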